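/- For any seminormal quasi-crystals Q and Q' of the same type Φ, the tensor product Q ⊗ Q' (with the structure maps defined below on Q × Q') satisfies all the axioms of a seminormal quasi-crystal of type Φ. -/

import Mathlib

/-! ## Root system setting -/

/-- The data of a root system `Φ` in a Euclidean space `V`, together with a choice of
simple roots `(α_i)_{i ∈ ι}` and a weight lattice `Λ`, with the integer-valued coroot
pairing `pair λ i = ⟨λ, α_i^∨⟩ = 2⟪λ, α_i⟫/⟪α_i, α_i⟫` on the weight lattice. -/
structure QCSetting (V : Type*) [NormedAddCommGroup V] [InnerProductSpace ℝ V]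
    (ι : Type*) where
  Φ : Set V
  finite : Φ.Finite
  nonempty : Φ.Nonempty
  zero_not_mem : (0 : V) ∉ Φ
  reflect_mem : ∀ a ∈ Φ, ∀ b ∈ Φ, b - (2 * (inner ℝ b a : ℝ) / (inner ℝ a a : ℝ)) • a ∈ Φ
  smul_root : ∀ a ∈ Φ, ∀ k : ℝ, k • a ∈ Φ → k = 1 ∨ k = -1
  simple : ι → V
  simple_mem : ∀ i, simple i ∈ Φ
  simple_indep : LinearIndependent ℝ simple
  Λ : AddSubgroup V
  lattice_spans : Submodule.span ℝ (Λ : Set V) = ⊤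
  root_mem_lattice : ∀ a ∈ Φ, a ∈ Λ
  pair : Λ → ι → ℤ
  pair_spec : ∀ (v : Λ) (i : ι),
    (pair v i : ℝ) = 2 * (inner ℝ (v : V) (simple i) : ℝ) / (inner ℝ (simple i) (simple i) : ℝ)

variable {V : Type*} [NormedAddCommGroup V] [InnerProductSpace ℝ V] {ι : Type*}

/-! ## Quasi-crystals -/

/-- The structure maps of a quasi-crystal of type `S` on an underlying set `Q`:
a weight map `wt` with values in the weight lattice, partial quasi-Kashiwara operators
`e i, f i : Q → Q ⊔ {⊥}` (realized as `Option`-valued maps, `none` playing the role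
of `⊥`), and maps `ε i, φ i : Q → ℤ ∪ {+∞}` (realized as `WithTop ℤ`). -/
structure QC (S : QCSetting V ι) (Q : Type*) where
  wt : Q → S.Λ
  e : ι → Q → Option Q
  f : ι → Q → Option Q
  ε : ι → Q → WithTop ℤ
  φ : ι → Q → WithTop ℤ

/-- `k`-fold iteration of a partial map `g : Q → Option Q` starting at `x`. -/
def optIter {Q : Type*} (g : Q → Option Q) (k : ℕ) (x : Q) : Option Q :=
  (fun o => o.bind g)^[k] (some x)

/-- The axioms of a seminormal quasi-crystal. -/
structure QC.IsSeminormal {S : QCSetting V ι} {Q : Type*} (𝒬 : QC S Q) : Prop where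
  phi_eq : ∀ i x, 𝒬.φ i x = 𝒬.ε i x + ((S.pair (𝒬.wt x) i : ℤ) : WithTop ℤ)
  wt_e : ∀ i x y, 𝒬.e i x = some y → (𝒬.wt y : V) = (𝒬.wt x : V) + S.simple i
  wt_f : ∀ i x y, 𝒬.f i x = some y → (𝒬.wt y : V) = (𝒬.wt x : V) - S.simple i
  e_iff_f : ∀ i x y, 𝒬.e i x = some y ↔ 𝒬.f i y = some x
  e_of_top : ∀ i x, 𝒬.ε i x = ⊤ → 𝒬.e i x = none
  f_of_top : ∀ i x, 𝒬.ε i x = ⊤ → 𝒬.f i x = none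
  eps_spec : ∀ i x, 𝒬.ε i x ≠ ⊤ → ∃ n : ℕ, 𝒬.ε i x = ((n : ℤ) : WithTop ℤ) ∧
    IsGreatest {k : ℕ | (optIter (𝒬.e i) k x).isSome} n
  phi_spec : ∀ i x, 𝒬.ε i x ≠ ⊤ → ∃ n : ℕ, 𝒬.φ i x = ((n : ℤ) : WithTop ℤ) ∧
    IsGreatest {k : ℕ | (optIter (𝒬.f i) k x).isSome} n

/-- A seminormal crystal is a seminormal quasi-crystal in which `ε i x ≠ +∞` always. -/
def QC.IsSeminormalCrystal {S : QCSetting V ι} {Q : Type*} (𝒬 : QC S Q) : Prop :=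
  𝒬.IsSeminormal ∧ ∀ i x, 𝒬.ε i x ≠ ⊤

/-! ## Tensor product -/

/-- The tensor product of two quasi-crystals of the same type. -/
noncomputable def QC.tensor {S : QCSetting V ι} {Q Q' : Type*} (𝒬 : QC S Q) (𝒬' : QC S Q') :
    QC S (Q × Q') where
  wt p := 𝒬.wt p.1 + 𝒬'.wt p.2
  ε i p := max (𝒬.ε i p.1) (𝒬'.ε i p.2 + ((-(S.pair (𝒬.wt p.1) i) : ℤ) : WithTop ℤ))
  φ i p := max (𝒬.φ i p.1 + ((S.pair (𝒬'.wt p.2) i : ℤ) : WithTop ℤ)) (𝒬'.φ i p.2)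
  e i p := if 𝒬'.ε i p.2 ≤ 𝒬.φ i p.1
    then (𝒬.e i p.1).map (fun y => (y, p.2))
    else (𝒬'.e i p.2).map (fun y => (p.1, y))
  f i p := if 𝒬'.ε i p.2 < 𝒬.φ i p.1
    then (𝒬.f i p.1).map (fun y => (y, p.2))
    else (𝒬'.f i p.2).map (fun y => (p.1, y))

/-! ## Quasi-tensor product -/

/-- The (inverse-free) quasi-tensor product of two quasi-crystals of the same type. -/
noncomputable def QC.qtensor {S : QCSetting V ι} {Q Q' : Type*} (𝒬 : QC S Q) (𝒬' : QC S Q') :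
    QC S (Q × Q') where
  wt p := 𝒬.wt p.1 + 𝒬'.wt p.2
  ε i p := if 0 < 𝒬.φ i p.1 ∧ 0 < 𝒬'.ε i p.2 then ⊤
    else max (𝒬.ε i p.1) (𝒬'.ε i p.2 + ((-(S.pair (𝒬.wt p.1) i) : ℤ) : WithTop ℤ))
  φ i p := if 0 < 𝒬.φ i p.1 ∧ 0 < 𝒬'.ε i p.2 then ⊤
    else max (𝒬.φ i p.1 + ((S.pair (𝒬'.wt p.2) i : ℤ) : WithTop ℤ)) (𝒬'.φ i p.2)
  e i p := if 0 < 𝒬.φ i p.1 ∧ 0 < 𝒬'.ε i p.2 then none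
    else if 𝒬'.ε i p.2 ≤ 𝒬.φ i p.1 then (𝒬.e i p.1).map (fun y => (y, p.2))
    else (𝒬'.e i p.2).map (fun y => (p.1, y))
  f i p := if 0 < 𝒬.φ i p.1 ∧ 0 < 𝒬'.ε i p.2 then none
    else if 𝒬'.ε i p.2 < 𝒬.φ i p.1 then (𝒬.f i p.1).map (fun y => (y, p.2))
    else (𝒬'.f i p.2).map (fun y => (p.1, y))

/-! ## Homomorphisms -/

/-- A quasi-crystal homomorphism `ψ : 𝒬 → 𝒬'`, i.e. a map `Q ⊔ {⊥} → Q' ⊔ {⊥}`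
(realized on `Option`s, `none` playing the role of `⊥`) compatible with the structure
maps in the appropriate sense. -/
structure QCHom {S : QCSetting V ι} {Q Q' : Type*} (𝒬 : QC S Q) (𝒬' : QC S Q') where
  toFun : Option Q → Option Q'
  map_none : toFun none = none
  wt_eq : ∀ x y, toFun (some x) = some y → 𝒬'.wt y = 𝒬.wt x
  eps_eq : ∀ i x y, toFun (some x) = some y → 𝒬'.ε i y = 𝒬.ε i x
  phi_eq : ∀ i x y, toFun (some x) = some y → 𝒬'.φ i y = 𝒬.φ i x
  comm_e : ∀ i x x' y y', 𝒬.e i x = some x' → toFun (some x) = some y →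
    toFun (some x') = some y' → 𝒬'.e i y = some y'
  comm_f : ∀ i x x' y y', 𝒬.f i x = some x' → toFun (some x) = some y →
    toFun (some x') = some y' → 𝒬'.f i y = some y'

/-! ## The free `⊗`-quasi-crystal monoid -/

/-- Weight of a word: the sum of the weights of its letters. -/
def freeWt {S : QCSetting V ι} {Q : Type*} (𝒬 : QC S Q) : List Q → S.Λ
  | [] => 0
  | x :: w => 𝒬.wt x + freeWt 𝒬 w

/-- The map `ε̈_i` of the free `⊗`-quasi-crystal monoid. -/
def freeEps {S : QCSetting V ι} {Q : Type*} (𝒬 : QC S Q) (i : ι) : List Q → WithTop ℤ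
  | [] => 0
  | x :: w => max (𝒬.ε i x) (freeEps 𝒬 i w + ((-(S.pair (𝒬.wt x) i) : ℤ) : WithTop ℤ))

/-- The map `φ̈_i` of the free `⊗`-quasi-crystal monoid. -/
def freePhi {S : QCSetting V ι} {Q : Type*} (𝒬 : QC S Q) (i : ι) : List Q → WithTop ℤ
  | [] => 0
  | x :: w => max (𝒬.φ i x + ((S.pair (freeWt 𝒬 w) i : ℤ) : WithTop ℤ)) (freePhi 𝒬 i w)

/-- The operator `ë_i` of the free `⊗`-quasi-crystal monoid. -/
noncomputable def freeE {S : QCSetting V ι} {Q : Type*} (𝒬 : QC S Q) (i : ι) : List Q → Option (List Q)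
  | [] => none
  | x :: w => if freeEps 𝒬 i w ≤ 𝒬.φ i x
      then (𝒬.e i x).map (· :: w)
      else (freeE 𝒬 i w).map (x :: ·)

/-- The operator `f̈_i` of the free `⊗`-quasi-crystal monoid. -/
noncomputable def freeF {S : QCSetting V ι} {Q : Type*} (𝒬 : QC S Q) (i : ι) : List Q → Option (List Q)
  | [] => none
  | x :: w => if freeEps 𝒬 i w < 𝒬.φ i x
      then (𝒬.f i x).map (· :: w)
      else (freeF 𝒬 i w).map (x :: ·)

/-- The quasi-crystal structure of the free `⊗`-quasi-crystal monoid `F^⊗(𝒬)`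
on the free monoid `Q*`. -/
noncomputable def freeTensorQC {S : QCSetting V ι} {Q : Type*} (𝒬 : QC S Q) : QC S (FreeMonoid Q) where
  wt w := freeWt 𝒬 (FreeMonoid.toList w)
  ε i w := freeEps 𝒬 i (FreeMonoid.toList w)
  φ i w := freePhi 𝒬 i (FreeMonoid.toList w)
  e i w := (freeE 𝒬 i (FreeMonoid.toList w)).map (fun l => FreeMonoid.ofList l)
  f i w := (freeF 𝒬 i (FreeMonoid.toList w)).map (fun l => FreeMonoid.ofList l)

/-! ## The free `⊗̈`-quasi-crystal monoid -/

/-- The map `ε̈_i` of the free `⊗̈`-quasi-crystal monoid. -/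
noncomputable def qfreeEps {S : QCSetting V ι} {Q : Type*} (𝒬 : QC S Q) (i : ι) : List Q → WithTop ℤ
  | [] => 0
  | x :: w => if 0 < 𝒬.φ i x ∧ 0 < qfreeEps 𝒬 i w then ⊤
      else max (𝒬.ε i x) (qfreeEps 𝒬 i w + ((-(S.pair (𝒬.wt x) i) : ℤ) : WithTop ℤ))

/-- The map `φ̈_i` of the free `⊗̈`-quasi-crystal monoid. -/
noncomputable def qfreePhi {S : QCSetting V ι} {Q : Type*} (𝒬 : QC S Q) (i : ι) : List Q → WithTop ℤ
  | [] => 0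
  | x :: w => if 0 < 𝒬.φ i x ∧ 0 < qfreeEps 𝒬 i w then ⊤
      else max (𝒬.φ i x + ((S.pair (freeWt 𝒬 w) i : ℤ) : WithTop ℤ)) (qfreePhi 𝒬 i w)

/-- The operator `ë_i` of the free `⊗̈`-quasi-crystal monoid. -/
noncomputable def qfreeE {S : QCSetting V ι} {Q : Type*} (𝒬 : QC S Q) (i : ι) : List Q → Option (List Q)
  | [] => none
  | x :: w => if 0 < 𝒬.φ i x ∧ 0 < qfreeEps 𝒬 i w then none
      else if qfreeEps 𝒬 i w ≤ 𝒬.φ i x then (𝒬.e i x).map (· :: w)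
      else (qfreeE 𝒬 i w).map (x :: ·)

/-- The operator `f̈_i` of the free `⊗̈`-quasi-crystal monoid. -/
noncomputable def qfreeF {S : QCSetting V ι} {Q : Type*} (𝒬 : QC S Q) (i : ι) : List Q → Option (List Q)
  | [] => none
  | x :: w => if 0 < 𝒬.φ i x ∧ 0 < qfreeEps 𝒬 i w then none
      else if qfreeEps 𝒬 i w < 𝒬.φ i x then (𝒬.f i x).map (· :: w)
      else (qfreeF 𝒬 i w).map (x :: ·)

/-- The quasi-crystal structure of the free `⊗̈`-quasi-crystal monoid `F^⊗̈(𝒬)`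
on the free monoid `Q*`. -/
noncomputable def freeQTensorQC {S : QCSetting V ι} {Q : Type*} (𝒬 : QC S Q) : QC S (FreeMonoid Q) where
  wt w := freeWt 𝒬 (FreeMonoid.toList w)
  ε i w := qfreeEps 𝒬 i (FreeMonoid.toList w)
  φ i w := qfreePhi 𝒬 i (FreeMonoid.toList w)
  e i w := (qfreeE 𝒬 i (FreeMonoid.toList w)).map (fun l => FreeMonoid.ofList l)
  f i w := (qfreeF 𝒬 i (FreeMonoid.toList w)).map (fun l => FreeMonoid.ofList l)

/-! ## Connected components, plactic and hypoplactic congruences -/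

/-- Two elements are connected in the quasi-crystal graph if they are related by the
reflexive-symmetric-transitive closure of the edge relation given by the
quasi-Kashiwara operators. -/
def QC.conn {S : QCSetting V ι} {Q : Type*} (𝒬 : QC S Q) : Q → Q → Prop :=
  Relation.EqvGen (fun x y => ∃ i, 𝒬.f i x = some y ∨ 𝒬.f i y = some x ∨
    𝒬.e i x = some y ∨ 𝒬.e i y = some x)

/-- The connected component `𝒬(x)` of a quasi-crystal `𝒬` containing `x`, as a
quasi-crystal on the subtype of elements connected with `x`. -/
def QC.compQC {S : QCSetting V ι} {Q : Type*} (𝒬 : QC S Q) (x : Q) :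
    QC S {y : Q // 𝒬.conn x y} where
  wt y := 𝒬.wt y.1
  ε i y := 𝒬.ε i y.1
  φ i y := 𝒬.φ i y.1
  e i y := (𝒬.e i y.1).pmap (fun z hz => (⟨z, hz⟩ : {y : Q // 𝒬.conn x y}))
    (fun z hz => Relation.EqvGen.trans _ _ _ y.2
      (Relation.EqvGen.rel _ _ ⟨i, Or.inr (Or.inr (Or.inl hz))⟩))
  f i y := (𝒬.f i y.1).pmap (fun z hz => (⟨z, hz⟩ : {y : Q // 𝒬.conn x y}))
    (fun z hz => Relation.EqvGen.trans _ _ _ y.2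
      (Relation.EqvGen.rel _ _ ⟨i, Or.inl hz⟩))

/-- The plactic congruence: `u ≈ v` iff there is a quasi-crystal isomorphism between the
connected components of `u` and `v` in `F^⊗(𝒬)` mapping `u` to `v`. -/
def placticRel {S : QCSetting V ι} {Q : Type*} (𝒬 : QC S Q)
    (u v : FreeMonoid Q) : Prop :=
  ∃ ψ : QCHom ((freeTensorQC 𝒬).compQC u) ((freeTensorQC 𝒬).compQC v),
    Function.Bijective ψ.toFun ∧
    ψ.toFun (some ⟨u, Relation.EqvGen.refl u⟩) = some ⟨v, Relation.EqvGen.refl v⟩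

/-- The hypoplactic congruence: `u ∼̈ v` iff there is a quasi-crystal isomorphism between
the connected components of `u` and `v` in `F^⊗̈(𝒬)` mapping `u` to `v`. -/
def hypoRel {S : QCSetting V ι} {Q : Type*} (𝒬 : QC S Q)
    (u v : FreeMonoid Q) : Prop :=
  ∃ ψ : QCHom ((freeQTensorQC 𝒬).compQC u) ((freeQTensorQC 𝒬).compQC v),
    Function.Bijective ψ.toFun ∧
    ψ.toFun (some ⟨u, Relation.EqvGen.refl u⟩) = some ⟨v, Relation.EqvGen.refl v⟩

/-! ## Quasi-crystal monoids -/

/-- A monoid is equidivisible if whenever `x₁y₁ = x₂y₂` one of the factorizations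
refines the other. -/
def Equidivisible (M : Type*) [Monoid M] : Prop :=
  ∀ x₁ x₂ y₁ y₂ : M, x₁ * y₁ = x₂ * y₂ →
    ∃ z : M, (x₂ = x₁ * z ∧ y₁ = z * y₂) ∨ (x₁ = x₂ * z ∧ y₂ = z * y₁)

/-- A `⊗`-quasi-crystal monoid: a seminormal quasi-crystal structure on a monoid whose
structure maps interact with the multiplication by the tensor-product rules. -/
structure IsTensorQCMon {S : QCSetting V ι} {M : Type*} [Monoid M] (𝒬 : QC S M) : Prop where
  seminormal : 𝒬.IsSeminormal
  wt_mul : ∀ x y, 𝒬.wt (x * y) = 𝒬.wt x + 𝒬.wt y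
  eps_mul : ∀ i x y, 𝒬.ε i (x * y) =
    max (𝒬.ε i x) (𝒬.ε i y + ((-(S.pair (𝒬.wt x) i) : ℤ) : WithTop ℤ))
  phi_mul : ∀ i x y, 𝒬.φ i (x * y) =
    max (𝒬.φ i x + ((S.pair (𝒬.wt y) i : ℤ) : WithTop ℤ)) (𝒬.φ i y)
  e_mul : ∀ i x y, 𝒬.e i (x * y) =
    if 𝒬.ε i y ≤ 𝒬.φ i x then (𝒬.e i x).map (· * y) else (𝒬.e i y).map (x * ·)
  f_mul : ∀ i x y, 𝒬.f i (x * y) =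
    if 𝒬.ε i y < 𝒬.φ i x then (𝒬.f i x).map (· * y) else (𝒬.f i y).map (x * ·)

/-- A `⊗̈`-quasi-crystal monoid: a seminormal quasi-crystal structure on a monoid such
that `x ⊗̈ y ↦ x·y` induces a quasi-crystal homomorphism `M ⊗̈ M → M`. -/
def IsQTensorQCMon {S : QCSetting V ι} {M : Type*} [Monoid M] (𝒬 : QC S M) : Prop :=
  𝒬.IsSeminormal ∧
  ∃ ψ : QCHom (𝒬.qtensor 𝒬) 𝒬, ψ.toFun = Option.map (fun p => p.1 * p.2)

/-! ## The bicyclic monoid with zero `B₀` and the monoid `Z₀` -/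

/-- The bicyclic monoid `⟨−, + | (+)(−) = ε⟩`: elements are normal forms `(−)^a(+)^b`. -/
structure Bic where
  neg : ℕ
  pos : ℕ
deriving DecidableEq

instance : Mul Bic :=
  ⟨fun x y => ⟨x.neg + (y.neg - x.pos), y.pos + (x.pos - y.neg)⟩⟩

theorem Bic.mul_def (x y : Bic) :
    x * y = ⟨x.neg + (y.neg - x.pos), y.pos + (x.pos - y.neg)⟩ := rfl

instance : One Bic := ⟨⟨0, 0⟩⟩

theorem Bic.one_def : (1 : Bic) = ⟨0, 0⟩ := rfl

instance : Monoid Bic where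
  mul_assoc x y z := by
    simp only [Bic.mul_def, Bic.mk.injEq]
    omega
  one_mul x := by
    simp only [Bic.one_def, Bic.mul_def]
    cases x
    simp only [Bic.mk.injEq]
    omega
  mul_one x := by
    simp only [Bic.one_def, Bic.mul_def]
    cases x
    simp only [Bic.mk.injEq]
    omega

/-- The bicyclic monoid with a zero element adjoined,
`B₀ = ⟨0, −, + | (+)(−) = ε, 0x = x0 = 0⟩`. -/
abbrev B0 : Type := WithZero Bic

/-- The monoid `Z₀ = ⟨0, −, + | (+)(−) = 0, 0x = x0 = 0⟩`: the nonzero elements are the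
normal forms `(−)^a(+)^b`. -/
inductive Z0 : Type
  | zero : Z0
  | word : ℕ → ℕ → Z0
deriving DecidableEq

instance : Mul Z0 :=
  ⟨fun x y => match x, y with
    | Z0.zero, _ => Z0.zero
    | _, Z0.zero => Z0.zero
    | Z0.word a b, Z0.word c d =>
        if 0 < b ∧ 0 < c then Z0.zero else Z0.word (a + c) (b + d)⟩

instance : One Z0 := ⟨Z0.word 0 0⟩

instance : Zero Z0 := ⟨Z0.zero⟩

theorem Z0.one_def : (1 : Z0) = Z0.word 0 0 := rfl
theorem Z0.zero_def : (0 : Z0) = Z0.zero := rfl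
theorem Z0.zero_mul' (x : Z0) : Z0.zero * x = Z0.zero := by cases x <;> rfl
theorem Z0.mul_zero' (x : Z0) : x * Z0.zero = Z0.zero := by cases x <;> rfl
theorem Z0.word_mul_word (a b c d : ℕ) :
    Z0.word a b * Z0.word c d =
      if 0 < b ∧ 0 < c then Z0.zero else Z0.word (a + c) (b + d) := rfl

instance : MonoidWithZero Z0 where
  mul_assoc x y z := by
    cases x <;> cases y <;> cases z <;>
      simp only [Z0.zero_mul', Z0.mul_zero', Z0.word_mul_word]
    · split_ifs <;> simp_all [Z0.zero_mul', Z0.mul_zero', Z0.word_mul_word] <;>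
        split_ifs <;> simp_all <;> omega
  one_mul x := by
    cases x
    · rfl
    · simp [Z0.one_def, Z0.word_mul_word]
  mul_one x := by
    cases x
    · rfl
    · simp [Z0.one_def, Z0.word_mul_word]
  zero_mul x := by cases x <;> rfl
  mul_zero x := by cases x <;> rfl

/-! ## Signature maps -/

/-- The `i`-signature map for the tensor product `⊗`:
`sgn_i^⊗(w) = 0` if `ε̈_i(w) = +∞`, and `(−)^{ε̈_i(w)}(+)^{φ̈_i(w)}` otherwise. -/
noncomputable def tsgn {V : Type*} [NormedAddCommGroup V] [InnerProductSpace ℝ V] {ι : Type*}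
    {S : QCSetting V ι} {Q : Type*} (𝒬 : QC S Q) (i : ι) (w : FreeMonoid Q) : B0 :=
  if freeEps 𝒬 i (FreeMonoid.toList w) = ⊤ then 0
  else ↑(Bic.mk (WithTop.untopD 0 (freeEps 𝒬 i (FreeMonoid.toList w))).toNat
      (WithTop.untopD 0 (freePhi 𝒬 i (FreeMonoid.toList w))).toNat)

/-- The `i`-signature map for the quasi-tensor product `⊗̈`:
`sgn_i^⊗̈(w) = 0` if `ε̈_i(w) = +∞`, and `(−)^{ε̈_i(w)}(+)^{φ̈_i(w)}` otherwise. -/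
noncomputable def qsgn {V : Type*} [NormedAddCommGroup V] [InnerProductSpace ℝ V] {ι : Type*}
    {S : QCSetting V ι} {Q : Type*} (𝒬 : QC S Q) (i : ι) (w : FreeMonoid Q) : Z0 :=
  if qfreeEps 𝒬 i (FreeMonoid.toList w) = ⊤ then 0
  else Z0.word (WithTop.untopD 0 (qfreeEps 𝒬 i (FreeMonoid.toList w))).toNat
      (WithTop.untopD 0 (qfreePhi 𝒬 i (FreeMonoid.toList w))).toNat


/-!
The global string axioms `eps_spec` and `phi_spec` follow from local ones: `ε̈_i ≥ 0`, `ë_i x`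
is defined iff `ε̈_i x > 0`, and `ε̈_i` drops by one along `ë_i` (dually for `f̈_i`, `φ̈_i`).
A seminormal quasi-crystal has these local properties, and for `x ⊗ x'` with `a = ε̈_i x` and
`b = ε̈_i x'` finite and `c = ⟨wt x, α_i^∨⟩` they become integer inequalities: `ë_i` acts on the
first factor exactly when `b ≤ a + c`, and then `ε̈_i (x ⊗ x') = max a (b - c) = a`; otherwise
it acts on `x'` and `ε̈_i (x ⊗ x') = b - c`. When a factor has `ε̈_i = +∞`, so has `x ⊗ x'`, and
the tensor rule always lets the operator act on a factor where it is undefined.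
-/

section optIter

variable {P : Type*} {g : P → Option P}

@[simp]
theorem optIter_one (x : P) : optIter g 1 x = g x := by
  simp [optIter]

theorem optIter_succ (k : ℕ) (x : P) : optIter g (k + 1) x = (g x).bind (optIter g k) := by
  cases hx : g x with
  | none => simp [optIter, hx, Function.iterate_fixed]
  | some y => simp [optIter, hx]

theorem optIter_succ_of_eq_some {x y : P} (hxy : g x = some y) (k : ℕ) :
    optIter g (k + 1) x = optIter g k y := by
  simp [optIter_succ, hxy]

theorem isSome_iff_pos_of_isGreatest_optIter {x : P} {n : ℕ}
    (hn : IsGreatest {k | (optIter g k x).isSome} n) : (g x).isSome ↔ 0 < n := by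
  constructor
  · intro hx
    exact hn.2 (by simpa using hx)
  · intro hpos
    obtain ⟨m, rfl⟩ := Nat.exists_eq_add_of_le' hpos
    have := hn.1
    simp only [Set.mem_ofPred_eq, optIter_succ] at this
    cases hx : g x <;> simp_all

theorem eq_add_one_of_isGreatest_optIter {x y : P} {n m : ℕ} (hxy : g x = some y)
    (hn : IsGreatest {k | (optIter g k x).isSome} n)
    (hm : IsGreatest {k | (optIter g k y).isSome} m) : n = m + 1 := by
  have hle : m + 1 ≤ n := hn.2 (by simpa [optIter_succ_of_eq_some hxy] using hm.1)
  have hge : n - 1 ≤ m := hm.2 (by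
    have := hn.1
    rwa [Set.mem_ofPred_eq, ← Nat.sub_add_cancel (by omega : 1 ≤ n),
      optIter_succ_of_eq_some hxy] at this)
  omega

theorem isGreatest_optIter {μ : P → WithTop ℤ}
    (hsome : ∀ x, μ x ≠ ⊤ → ((g x).isSome ↔ 0 < μ x))
    (hstep : ∀ x y, g x = some y → μ y + 1 = μ x) (n : ℕ) {x : P} (hx : μ x = (n : ℤ)) :
    IsGreatest {k | (optIter g k x).isSome} n := by
  induction n generalizing x with
  | zero =>
    have hnone : g x = none := by simpa [hx] using (hsome x (hx ▸ WithTop.coe_ne_top)).not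
    refine ⟨rfl, fun k hk => ?_⟩
    cases k with
    | zero => rfl
    | succ k => simp [optIter_succ, hnone] at hk
  | succ n ih =>
    have hpos : 0 < μ x := by rw [hx]; exact_mod_cast n.succ_pos
    obtain ⟨y, hy⟩ :=
      Option.isSome_iff_exists.mp ((hsome x (hx ▸ WithTop.coe_ne_top)).mpr hpos)
    have hμy : μ y = (n : ℤ) :=
      WithTop.add_right_cancel WithTop.one_ne_top (by rw [hstep x y hy, hx]; push_cast; rfl)
    have hy_great := ih hμy
    refine ⟨by simpa [optIter_succ_of_eq_some hy] using hy_great.1, fun k hk => ?_⟩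
    cases k with
    | zero => omega
    | succ k =>
      exact Nat.succ_le_succ (hy_great.2 (by simpa [optIter_succ_of_eq_some hy] using hk))

theorem exists_isGreatest_optIter {μ : P → WithTop ℤ} (hnonneg : ∀ x, 0 ≤ μ x)
    (hsome : ∀ x, μ x ≠ ⊤ → ((g x).isSome ↔ 0 < μ x))
    (hstep : ∀ x y, g x = some y → μ y + 1 = μ x) {x : P} (hx : μ x ≠ ⊤) :
    ∃ n : ℕ, μ x = (n : ℤ) ∧ IsGreatest {k | (optIter g k x).isSome} n := by
  obtain ⟨a, ha⟩ := WithTop.ne_top_iff_exists.mp hx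
  lift a to ℕ using (by exact_mod_cast ha ▸ hnonneg x)
  exact ⟨a, ha.symm, isGreatest_optIter hsome hstep a ha.symm⟩

end optIter

theorem WithTop.lt_add_one_iff_le {u v : WithTop ℤ} (hv : v ≠ ⊤) : u < v + 1 ↔ u ≤ v := by
  lift v to ℤ using hv
  induction u using WithTop.recTopCoe with
  | top => simp [← WithTop.coe_one, ← WithTop.coe_add]
  | coe a => norm_cast; omega

theorem QCSetting.pair_add (S : QCSetting V ι) (u v : S.Λ) (i : ι) :
    S.pair (u + v) i = S.pair u i + S.pair v i := by
  have : (S.pair (u + v) i : ℝ) = S.pair u i + S.pair v i := by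
    simp only [S.pair_spec, AddSubgroup.coe_add, inner_add_left]
    ring
  exact_mod_cast this

namespace QC.IsSeminormal

variable {S : QCSetting V ι} {Q : Type*} {𝒬 : QC S Q} {i : ι} {x y : Q}

theorem phi_eq_top_iff (h : 𝒬.IsSeminormal) : 𝒬.φ i x = ⊤ ↔ 𝒬.ε i x = ⊤ := by
  simp [h.phi_eq]

theorem eps_ne_top_of_e_eq_some (h : 𝒬.IsSeminormal) (hxy : 𝒬.e i x = some y) :
    𝒬.ε i x ≠ ⊤ :=
  fun hx => by simp [h.e_of_top i x hx] at hxy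

theorem eps_ne_top_of_f_eq_some (h : 𝒬.IsSeminormal) (hxy : 𝒬.f i x = some y) :
    𝒬.ε i x ≠ ⊤ :=
  fun hx => by simp [h.f_of_top i x hx] at hxy

theorem eps_nonneg (h : 𝒬.IsSeminormal) (i : ι) (x : Q) : 0 ≤ 𝒬.ε i x := by
  by_cases hx : 𝒬.ε i x = ⊤
  · simp [hx]
  · obtain ⟨n, hn, -⟩ := h.eps_spec i x hx
    simp [hn]

theorem phi_nonneg (h : 𝒬.IsSeminormal) (i : ι) (x : Q) : 0 ≤ 𝒬.φ i x := by
  by_cases hx : 𝒬.ε i x = ⊤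
  · simp [h.phi_eq_top_iff.mpr hx]
  · obtain ⟨n, hn, -⟩ := h.phi_spec i x hx
    simp [hn]

theorem e_isSome_iff (h : 𝒬.IsSeminormal) (hx : 𝒬.ε i x ≠ ⊤) :
    (𝒬.e i x).isSome ↔ 0 < 𝒬.ε i x := by
  obtain ⟨n, hn, hgreat⟩ := h.eps_spec i x hx
  rw [isSome_iff_pos_of_isGreatest_optIter hgreat, hn]
  norm_cast

theorem f_isSome_iff (h : 𝒬.IsSeminormal) (hx : 𝒬.ε i x ≠ ⊤) :
    (𝒬.f i x).isSome ↔ 0 < 𝒬.φ i x := by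
  obtain ⟨n, hn, hgreat⟩ := h.phi_spec i x hx
  rw [isSome_iff_pos_of_isGreatest_optIter hgreat, hn]
  norm_cast

theorem eps_add_one_of_e_eq_some (h : 𝒬.IsSeminormal) (hxy : 𝒬.e i x = some y) :
    𝒬.ε i y + 1 = 𝒬.ε i x := by
  obtain ⟨n, hn, hx⟩ := h.eps_spec i x (h.eps_ne_top_of_e_eq_some hxy)
  obtain ⟨m, hm, hy⟩ :=
    h.eps_spec i y (h.eps_ne_top_of_f_eq_some ((h.e_iff_f i x y).mp hxy))
  rw [hn, hm, eq_add_one_of_isGreatest_optIter hxy hx hy]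
  push_cast
  rfl

theorem phi_add_one_of_f_eq_some (h : 𝒬.IsSeminormal) (hxy : 𝒬.f i x = some y) :
    𝒬.φ i y + 1 = 𝒬.φ i x := by
  obtain ⟨n, hn, hx⟩ := h.phi_spec i x (h.eps_ne_top_of_f_eq_some hxy)
  obtain ⟨m, hm, hy⟩ :=
    h.phi_spec i y (h.eps_ne_top_of_e_eq_some ((h.e_iff_f i y x).mpr hxy))
  rw [hn, hm, eq_add_one_of_isGreatest_optIter hxy hx hy]
  push_cast
  rfl

theorem exists_eps_phi_eq_coe (h : 𝒬.IsSeminormal) (hx : 𝒬.ε i x ≠ ⊤) :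
    ∃ a : ℤ, 𝒬.ε i x = a ∧ 𝒬.φ i x = ↑(a + S.pair (𝒬.wt x) i) ∧
      0 ≤ a ∧ 0 ≤ a + S.pair (𝒬.wt x) i := by
  lift 𝒬.ε i x to ℤ using hx with a ha
  have hφ : 𝒬.φ i x = ↑(a + S.pair (𝒬.wt x) i) := by rw [h.phi_eq, ← ha]; rfl
  refine ⟨a, rfl, hφ, ?_, ?_⟩
  · exact_mod_cast ha ▸ h.eps_nonneg i x
  · exact_mod_cast hφ ▸ h.phi_nonneg i x

theorem pair_wt_of_e_eq_some (h : 𝒬.IsSeminormal) (hxy : 𝒬.e i x = some y) :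
    S.pair (𝒬.wt y) i = S.pair (𝒬.wt x) i + 2 := by
  obtain ⟨a, ha, hφ, -⟩ := h.exists_eps_phi_eq_coe (h.eps_ne_top_of_e_eq_some hxy)
  obtain ⟨b, hb, hψ, -⟩ :=
    h.exists_eps_phi_eq_coe (h.eps_ne_top_of_f_eq_some ((h.e_iff_f i x y).mp hxy))
  have hε := h.eps_add_one_of_e_eq_some hxy
  have hφ' := h.phi_add_one_of_f_eq_some ((h.e_iff_f i x y).mp hxy)
  rw [ha, hb] at hε
  rw [hφ, hψ] at hφ'
  norm_cast at hε hφ'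
  omega

end QC.IsSeminormal

namespace QC

variable {S : QCSetting V ι} {Q Q' : Type*} {𝒬 : QC S Q} {𝒬' : QC S Q'} {i : ι}
  {x : Q} {x' : Q'}

theorem tensor_eps_ne_top_iff :
    (𝒬.tensor 𝒬').ε i (x, x') ≠ ⊤ ↔ 𝒬.ε i x ≠ ⊤ ∧ 𝒬'.ε i x' ≠ ⊤ := by
  simp [QC.tensor, not_or]

theorem tensor_e_of_le (hc : 𝒬'.ε i x' ≤ 𝒬.φ i x) :
    (𝒬.tensor 𝒬').e i (x, x') = (𝒬.e i x).map (·, x') :=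
  if_pos hc

theorem tensor_e_of_lt (hc : 𝒬.φ i x < 𝒬'.ε i x') :
    (𝒬.tensor 𝒬').e i (x, x') = (𝒬'.e i x').map (x, ·) :=
  if_neg hc.not_ge

theorem tensor_f_of_lt (hc : 𝒬'.ε i x' < 𝒬.φ i x) :
    (𝒬.tensor 𝒬').f i (x, x') = (𝒬.f i x).map (·, x') :=
  if_pos hc

theorem tensor_f_of_le (hc : 𝒬.φ i x ≤ 𝒬'.ε i x') :
    (𝒬.tensor 𝒬').f i (x, x') = (𝒬'.f i x').map (x, ·) :=
  if_neg hc.not_gt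

end QC

namespace QC.IsSeminormal

variable {S : QCSetting V ι} {Q Q' : Type*} {𝒬 : QC S Q} {𝒬' : QC S Q'}

theorem tensor_phi_eq (h : 𝒬.IsSeminormal) (h' : 𝒬'.IsSeminormal) (i : ι) (p : Q × Q') :
    (𝒬.tensor 𝒬').φ i p =
      (𝒬.tensor 𝒬').ε i p + ((S.pair ((𝒬.tensor 𝒬').wt p) i : ℤ) : WithTop ℤ) := by
  simp only [QC.tensor, S.pair_add, h.phi_eq, h'.phi_eq]
  induction 𝒬.ε i p.1 using WithTop.recTopCoe with
  | top => simp
  | coe a =>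
    induction 𝒬'.ε i p.2 using WithTop.recTopCoe with
    | top => simp
    | coe b => norm_cast; omega

theorem tensor_wt_e (h : 𝒬.IsSeminormal) (h' : 𝒬'.IsSeminormal) (i : ι) (p q : Q × Q')
    (hpq : (𝒬.tensor 𝒬').e i p = some q) :
    ((𝒬.tensor 𝒬').wt q : V) = ((𝒬.tensor 𝒬').wt p : V) + S.simple i := by
  simp only [QC.tensor] at hpq ⊢
  split_ifs at hpq <;> obtain ⟨z, hz, rfl⟩ := Option.map_eq_some_iff.mp hpq
  · simp only [AddSubgroup.coe_add, h.wt_e i p.1 z hz]; abel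
  · simp only [AddSubgroup.coe_add, h'.wt_e i p.2 z hz]; abel

theorem tensor_wt_f (h : 𝒬.IsSeminormal) (h' : 𝒬'.IsSeminormal) (i : ι) (p q : Q × Q')
    (hpq : (𝒬.tensor 𝒬').f i p = some q) :
    ((𝒬.tensor 𝒬').wt q : V) = ((𝒬.tensor 𝒬').wt p : V) - S.simple i := by
  simp only [QC.tensor] at hpq ⊢
  split_ifs at hpq <;> obtain ⟨z, hz, rfl⟩ := Option.map_eq_some_iff.mp hpq
  · simp only [AddSubgroup.coe_add, h.wt_f i p.1 z hz]; abel
  · simp only [AddSubgroup.coe_add, h'.wt_f i p.2 z hz]; abel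

theorem tensor_e_eq_some_iff_f_eq_some (h : 𝒬.IsSeminormal) (h' : 𝒬'.IsSeminormal)
    (i : ι) (p q : Q × Q') :
    (𝒬.tensor 𝒬').e i p = some q ↔ (𝒬.tensor 𝒬').f i q = some p := by
  obtain ⟨x, x'⟩ := p
  constructor
  · intro hpq
    rcases le_or_gt (𝒬'.ε i x') (𝒬.φ i x) with hc | hc
    · obtain ⟨z, hz, rfl⟩ := Option.map_eq_some_iff.mp (QC.tensor_e_of_le hc ▸ hpq)
      have hzx := (h.e_iff_f i x z).mp hz
      have hφx : 𝒬.φ i x ≠ ⊤ := h.phi_eq_top_iff.not.mpr (h.eps_ne_top_of_e_eq_some hz)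
      have hlt : 𝒬'.ε i x' < 𝒬.φ i z := by
        rw [← h.phi_add_one_of_f_eq_some hzx, WithTop.lt_add_one_iff_le hφx]
        exact hc
      simp [QC.tensor_f_of_lt hlt, hzx]
    · obtain ⟨z', hz', rfl⟩ := Option.map_eq_some_iff.mp (QC.tensor_e_of_lt hc ▸ hpq)
      have hzx' := (h'.e_iff_f i x' z').mp hz'
      have hle : 𝒬.φ i x ≤ 𝒬'.ε i z' := by
        rw [← WithTop.lt_add_one_iff_le (h'.eps_ne_top_of_f_eq_some hzx'),
          h'.eps_add_one_of_e_eq_some hz']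
        exact hc
      simp [QC.tensor_f_of_le hle, hzx']
  · intro hqp
    obtain ⟨y, y'⟩ := q
    rcases lt_or_ge (𝒬'.ε i y') (𝒬.φ i y) with hc | hc
    · obtain ⟨z, hz, hzy⟩ := Option.map_eq_some_iff.mp (QC.tensor_f_of_lt hc ▸ hqp)
      obtain ⟨rfl, rfl⟩ := Prod.ext_iff.mp hzy
      have hle : 𝒬'.ε i y' ≤ 𝒬.φ i z := by
        rw [← WithTop.lt_add_one_iff_le (h.phi_eq_top_iff.not.mpr
          (h.eps_ne_top_of_e_eq_some ((h.e_iff_f i z y).mpr hz))),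
          h.phi_add_one_of_f_eq_some hz]
        exact hc
      simp [QC.tensor_e_of_le hle, (h.e_iff_f i z y).mpr hz]
    · obtain ⟨z', hz', hzy⟩ := Option.map_eq_some_iff.mp (QC.tensor_f_of_le hc ▸ hqp)
      obtain ⟨rfl, rfl⟩ := Prod.ext_iff.mp hzy
      have hze := (h'.e_iff_f i z' y').mpr hz'
      have hlt : 𝒬.φ i y < 𝒬'.ε i z' := by
        rw [← h'.eps_add_one_of_e_eq_some hze,
          WithTop.lt_add_one_iff_le (h'.eps_ne_top_of_f_eq_some hz')]
        exact hc
      simp [QC.tensor_e_of_lt hlt, hze]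

theorem tensor_e_of_eps_eq_top (h : 𝒬.IsSeminormal) (h' : 𝒬'.IsSeminormal) (i : ι)
    (p : Q × Q') (hp : (𝒬.tensor 𝒬').ε i p = ⊤) : (𝒬.tensor 𝒬').e i p = none := by
  obtain ⟨x, x'⟩ := p
  by_cases hx : 𝒬.ε i x = ⊤
  · have hc : 𝒬'.ε i x' ≤ 𝒬.φ i x := by simp [h.phi_eq_top_iff.mpr hx]
    simp [QC.tensor_e_of_le hc, h.e_of_top i x hx]
  · have hx' : 𝒬'.ε i x' = ⊤ := by
      by_contra hx'
      exact QC.tensor_eps_ne_top_iff.mpr ⟨hx, hx'⟩ hp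
    have hc : 𝒬.φ i x < 𝒬'.ε i x' :=
      hx' ▸ lt_top_iff_ne_top.mpr (h.phi_eq_top_iff.not.mpr hx)
    simp [QC.tensor_e_of_lt hc, h'.e_of_top i x' hx']

theorem tensor_f_of_eps_eq_top (h : 𝒬.IsSeminormal) (h' : 𝒬'.IsSeminormal) (i : ι)
    (p : Q × Q') (hp : (𝒬.tensor 𝒬').ε i p = ⊤) : (𝒬.tensor 𝒬').f i p = none := by
  obtain ⟨x, x'⟩ := p
  by_cases hx' : 𝒬'.ε i x' = ⊤
  · have hc : 𝒬.φ i x ≤ 𝒬'.ε i x' := by simp [hx']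
    simp [QC.tensor_f_of_le hc, h'.f_of_top i x' hx']
  · have hx : 𝒬.ε i x = ⊤ := by
      by_contra hx
      exact QC.tensor_eps_ne_top_iff.mpr ⟨hx, hx'⟩ hp
    have hc : 𝒬'.ε i x' < 𝒬.φ i x := by
      simpa [h.phi_eq_top_iff.mpr hx, lt_top_iff_ne_top] using hx'
    simp [QC.tensor_f_of_lt hc, h.f_of_top i x hx]

theorem tensor_eps_nonneg (h : 𝒬.IsSeminormal) (i : ι) (p : Q × Q') :
    0 ≤ (𝒬.tensor 𝒬').ε i p :=
  le_max_of_le_left (h.eps_nonneg i p.1)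

theorem tensor_phi_nonneg (h' : 𝒬'.IsSeminormal) (i : ι) (p : Q × Q') :
    0 ≤ (𝒬.tensor 𝒬').φ i p :=
  le_max_of_le_right (h'.phi_nonneg i p.2)

theorem tensor_e_isSome_iff (h : 𝒬.IsSeminormal) (h' : 𝒬'.IsSeminormal) (i : ι)
    (p : Q × Q') (hp : (𝒬.tensor 𝒬').ε i p ≠ ⊤) :
    ((𝒬.tensor 𝒬').e i p).isSome ↔ 0 < (𝒬.tensor 𝒬').ε i p := by
  obtain ⟨x, x'⟩ := p
  obtain ⟨hx, hx'⟩ := QC.tensor_eps_ne_top_iff.mp hp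
  obtain ⟨a, ha, hφ, ha0, hφ0⟩ := h.exists_eps_phi_eq_coe hx
  obtain ⟨b, hb, -⟩ := h'.exists_eps_phi_eq_coe hx'
  have hε : (𝒬.tensor 𝒬').ε i (x, x') = ↑(max a (b - S.pair (𝒬.wt x) i)) := by
    simp only [QC.tensor, ha, hb]
    norm_cast
  rw [hε, WithTop.coe_pos]
  rcases le_or_gt (𝒬'.ε i x') (𝒬.φ i x) with hc | hc
  · rw [QC.tensor_e_of_le hc, Option.isSome_map, h.e_isSome_iff hx, ha, WithTop.coe_pos]
    rw [hb, hφ, WithTop.coe_le_coe] at hc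
    omega
  · rw [QC.tensor_e_of_lt hc, Option.isSome_map, h'.e_isSome_iff hx', hb, WithTop.coe_pos]
    rw [hb, hφ, WithTop.coe_lt_coe] at hc
    omega

theorem tensor_eps_add_one_of_e_eq_some (h : 𝒬.IsSeminormal) (h' : 𝒬'.IsSeminormal)
    {i : ι} {p q : Q × Q'} (hpq : (𝒬.tensor 𝒬').e i p = some q) :
    (𝒬.tensor 𝒬').ε i q + 1 = (𝒬.tensor 𝒬').ε i p := by
  obtain ⟨x, x'⟩ := p
  rcases le_or_gt (𝒬'.ε i x') (𝒬.φ i x) with hc | hc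
  · obtain ⟨z, hz, rfl⟩ := Option.map_eq_some_iff.mp (QC.tensor_e_of_le hc ▸ hpq)
    have hx := h.eps_ne_top_of_e_eq_some hz
    obtain ⟨a, ha, hφ, -⟩ := h.exists_eps_phi_eq_coe hx
    obtain ⟨b, hb, -⟩ := h'.exists_eps_phi_eq_coe
      (ne_top_of_le_ne_top (h.phi_eq_top_iff.not.mpr hx) hc)
    obtain ⟨a', ha', -⟩ := h.exists_eps_phi_eq_coe
      (h.eps_ne_top_of_f_eq_some ((h.e_iff_f i x z).mp hz))
    have hstep := h.eps_add_one_of_e_eq_some hz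
    rw [ha, ha'] at hstep
    rw [hb, hφ] at hc
    simp only [QC.tensor, ha, ha', hb, h.pair_wt_of_e_eq_some hz]
    norm_cast at hc hstep ⊢
    omega
  · obtain ⟨z', hz', rfl⟩ := Option.map_eq_some_iff.mp (QC.tensor_e_of_lt hc ▸ hpq)
    have hx : 𝒬.ε i x ≠ ⊤ := h.phi_eq_top_iff.not.mp (ne_top_of_lt hc)
    obtain ⟨a, ha, hφ, -⟩ := h.exists_eps_phi_eq_coe hx
    obtain ⟨b, hb, -⟩ := h'.exists_eps_phi_eq_coe (h'.eps_ne_top_of_e_eq_some hz')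
    obtain ⟨b', hb', -⟩ := h'.exists_eps_phi_eq_coe
      (h'.eps_ne_top_of_f_eq_some ((h'.e_iff_f i x' z').mp hz'))
    have hstep := h'.eps_add_one_of_e_eq_some hz'
    rw [hb, hb'] at hstep
    rw [hb, hφ] at hc
    simp only [QC.tensor, ha, hb, hb']
    norm_cast at hc hstep ⊢
    omega

theorem tensor_phi_eq_top_iff (h : 𝒬.IsSeminormal) (h' : 𝒬'.IsSeminormal) {i : ι}
    {p : Q × Q'} : (𝒬.tensor 𝒬').φ i p = ⊤ ↔ (𝒬.tensor 𝒬').ε i p = ⊤ := by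
  simp [h.tensor_phi_eq h']

theorem tensor_f_isSome_iff (h : 𝒬.IsSeminormal) (h' : 𝒬'.IsSeminormal) (i : ι)
    (p : Q × Q') (hp : (𝒬.tensor 𝒬').φ i p ≠ ⊤) :
    ((𝒬.tensor 𝒬').f i p).isSome ↔ 0 < (𝒬.tensor 𝒬').φ i p := by
  obtain ⟨x, x'⟩ := p
  obtain ⟨hx, hx'⟩ := QC.tensor_eps_ne_top_iff.mp ((h.tensor_phi_eq_top_iff h').not.mp hp)
  obtain ⟨a, -, hφ, -⟩ := h.exists_eps_phi_eq_coe hx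
  obtain ⟨b, hb, hψ, hb0, hψ0⟩ := h'.exists_eps_phi_eq_coe hx'
  have hφt : (𝒬.tensor 𝒬').φ i (x, x') =
      ↑(max (a + S.pair (𝒬.wt x) i + S.pair (𝒬'.wt x') i) (b + S.pair (𝒬'.wt x') i)) := by
    simp only [QC.tensor, hφ, hψ]
    norm_cast
  rw [hφt, WithTop.coe_pos]
  rcases lt_or_ge (𝒬'.ε i x') (𝒬.φ i x) with hc | hc
  · rw [QC.tensor_f_of_lt hc, Option.isSome_map, h.f_isSome_iff hx, hφ, WithTop.coe_pos]
    rw [hb, hφ, WithTop.coe_lt_coe] at hc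
    omega
  · rw [QC.tensor_f_of_le hc, Option.isSome_map, h'.f_isSome_iff hx', hψ, WithTop.coe_pos]
    rw [hb, hφ, WithTop.coe_le_coe] at hc
    rw [max_eq_right (by omega)]

theorem tensor_phi_add_one_of_f_eq_some (h : 𝒬.IsSeminormal) (h' : 𝒬'.IsSeminormal)
    {i : ι} {p q : Q × Q'} (hpq : (𝒬.tensor 𝒬').f i p = some q) :
    (𝒬.tensor 𝒬').φ i q + 1 = (𝒬.tensor 𝒬').φ i p := by
  obtain ⟨x, x'⟩ := p
  rcases lt_or_ge (𝒬'.ε i x') (𝒬.φ i x) with hc | hc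
  · obtain ⟨z, hz, rfl⟩ := Option.map_eq_some_iff.mp (QC.tensor_f_of_lt hc ▸ hpq)
    have hx := h.eps_ne_top_of_f_eq_some hz
    obtain ⟨a, -, hφ, -⟩ := h.exists_eps_phi_eq_coe hx
    obtain ⟨b, hb, hψ, -⟩ := h'.exists_eps_phi_eq_coe (ne_top_of_lt hc)
    obtain ⟨a', -, hφ', -⟩ := h.exists_eps_phi_eq_coe
      (h.eps_ne_top_of_e_eq_some ((h.e_iff_f i z x).mpr hz))
    have hstep := h.phi_add_one_of_f_eq_some hz
    rw [hφ, hφ'] at hstep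
    rw [hb, hφ] at hc
    simp only [QC.tensor, hφ, hφ', hψ]
    norm_cast at hc hstep ⊢
    omega
  · obtain ⟨z', hz', rfl⟩ := Option.map_eq_some_iff.mp (QC.tensor_f_of_le hc ▸ hpq)
    have hx' := h'.eps_ne_top_of_f_eq_some hz'
    have hze := (h'.e_iff_f i z' x').mpr hz'
    obtain ⟨a, -, hφ, -⟩ := h.exists_eps_phi_eq_coe (h.phi_eq_top_iff.not.mp
      (ne_top_of_le_ne_top hx' hc))
    obtain ⟨b, hb, hψ, -⟩ := h'.exists_eps_phi_eq_coe hx'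
    obtain ⟨b', -, hψ', -⟩ := h'.exists_eps_phi_eq_coe (h'.eps_ne_top_of_e_eq_some hze)
    have hstep := h'.phi_add_one_of_f_eq_some hz'
    rw [hψ, hψ'] at hstep
    rw [hb, hφ] at hc
    have hpair := h'.pair_wt_of_e_eq_some hze
    simp only [QC.tensor, hφ, hψ, hψ']
    norm_cast at hc hstep ⊢
    omega

end QC.IsSeminormal

/-- The tensor product of two seminormal quasi-crystals of type `Φ`
satisfies all the axioms of a seminormal quasi-crystal of type `Φ`. -/
theorem tensor_isSeminormal {V : Type*} [NormedAddCommGroup V] [InnerProductSpace ℝ V]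
    {ι : Type*} {S : QCSetting V ι} {Q Q' : Type*} (𝒬 : QC S Q) (𝒬' : QC S Q')
    (h : 𝒬.IsSeminormal) (h' : 𝒬'.IsSeminormal) :
    (𝒬.tensor 𝒬').IsSeminormal :=
  { phi_eq := h.tensor_phi_eq h'
    wt_e := h.tensor_wt_e h'
    wt_f := h.tensor_wt_f h'
    e_iff_f := h.tensor_e_eq_some_iff_f_eq_some h'
    e_of_top := h.tensor_e_of_eps_eq_top h'
    f_of_top := h.tensor_f_of_eps_eq_top h'
    eps_spec := fun i _ hp => exists_isGreatest_optIter (h.tensor_eps_nonneg i)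
      (h.tensor_e_isSome_iff h' i) (fun _ _ => h.tensor_eps_add_one_of_e_eq_some h') hp
    phi_spec := fun i _ hp => exists_isGreatest_optIter (h'.tensor_phi_nonneg i)
      (h.tensor_f_isSome_iff h' i) (fun _ _ => h.tensor_phi_add_one_of_f_eq_some h')
      ((h.tensor_phi_eq_top_iff h').not.mpr hp) }
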